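/- arXiv:1504.00731 — 9 statements merged into one kernel-verified Lean document; each statement's English description precedes it below -/
import Mathlib

section
/- The 5th-order flux formula is exact on polynomials: if h is a polynomial of degree at most 4 and f(x) = (1/Δx)∫_{x-Δx/2}^{x+Δx/2} h(y) dy, then for any x_j and Δx > 0, (2/60)f(x_j-2Δx) - (13/60)f(x_j-Δx) + (47/60)f(x_j) + (27/60)f(x_j+Δx) - (3/60)f(x_j+2Δx) = h(x_j + Δx/2). -/
open intervalIntegral Finset in
lemma integral_poly_eval (h : Polynomial ℝ) (hdeg : h.natDegree ≤ 4) (a b : ℝ) :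
    (∫ y in a..b, h.eval y)
      = ∑ k ∈ Finset.range 5, h.coeff k * ((b ^ (k+1) - a ^ (k+1)) / (k+1)) := by
  have hev : ∀ y : ℝ, h.eval y = ∑ k ∈ Finset.range 5, h.coeff k * y ^ k := by
    intro y
    rw [Polynomial.eval_eq_sum_range' (n := 5) (by omega)]
  calc (∫ y in a..b, h.eval y)
      = ∫ y in a..b, ∑ k ∈ Finset.range 5, h.coeff k * y ^ k := by
        simp only [hev]
    _ = ∑ k ∈ Finset.range 5, ∫ y in a..b, h.coeff k * y ^ k := by
        apply intervalIntegral.integral_finset_sum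
        intro k _
        exact (intervalIntegrable_pow k).const_mul _
    _ = ∑ k ∈ Finset.range 5, h.coeff k * ((b ^ (k+1) - a ^ (k+1)) / (k+1)) := by
        refine Finset.sum_congr rfl fun k _ => ?_
        rw [intervalIntegral.integral_const_mul, integral_pow]

set_option maxHeartbeats 2000000 in
theorem weno5_exact_on_deg4_polynomials (h : Polynomial ℝ) (hdeg : h.natDegree ≤ 4)
    (xj Δx : ℝ) (hΔx : 0 < Δx)
    (f : ℝ → ℝ)
    (hf : ∀ x : ℝ, f x = (1 / Δx) * ∫ y in (x - Δx / 2)..(x + Δx / 2), h.eval y) :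
    (2/60) * f (xj - 2 * Δx) - (13/60) * f (xj - Δx) + (47/60) * f xj
      + (27/60) * f (xj + Δx) - (3/60) * f (xj + 2 * Δx)
      = h.eval (xj + Δx / 2) := by
  have hev : h.eval (xj + Δx / 2)
      = ∑ k ∈ Finset.range 5, h.coeff k * (xj + Δx / 2) ^ k := by
    rw [Polynomial.eval_eq_sum_range' (n := 5) (by omega)]
  simp only [hf, integral_poly_eval h hdeg, hev]
  simp only [Finset.sum_range_succ, Finset.sum_range_zero]
  push_cast
  field_simp
  ring
end

section
/- The 6th-order flux formula is exact on polynomials: if h is a polynomial of degree at most 5 and f(x) = (1/Δx)∫_{x-Δx/2}^{x+Δx/2} h(y) dy, then (1/60)f(x_j-2Δx) - (8/60)f(x_j-Δx) + (37/60)f(x_j) + (37/60)f(x_j+Δx) - (8/60)f(x_j+2Δx) + (1/60)f(x_j+3Δx) = h(x_j + Δx/2). -/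
set_option maxHeartbeats 4000000 in
theorem weno6_exact_on_deg5_polynomials (h : Polynomial ℝ) (hdeg : h.natDegree ≤ 5)
    (xj Δx : ℝ) (hΔx : 0 < Δx)
    (f : ℝ → ℝ)
    (hf : ∀ x : ℝ, f x = (1 / Δx) * ∫ y in (x - Δx / 2)..(x + Δx / 2), h.eval y) :
    (1/60) * f (xj - 2 * Δx) - (8/60) * f (xj - Δx) + (37/60) * f xj
      + (37/60) * f (xj + Δx) - (8/60) * f (xj + 2 * Δx) + (1/60) * f (xj + 3 * Δx)
      = h.eval (xj + Δx / 2) := by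
  have hne : Δx ≠ 0 := ne_of_gt hΔx
  have hrep : ∀ y : ℝ, h.eval y = ∑ k ∈ Finset.range 6, h.coeff k * y ^ k := by
    intro y
    exact Polynomial.eval_eq_sum_range' (lt_of_le_of_lt hdeg (by norm_num)) y
  have hint : ∀ a b : ℝ, (∫ y in a..b, h.eval y)
      = ∑ k ∈ Finset.range 6, h.coeff k * ((b ^ (k+1) - a ^ (k+1)) / (k+1)) := by
    intro a b
    simp only [hrep]
    rw [intervalIntegral.integral_finset_sum]
    · refine Finset.sum_congr rfl fun k _ => ?_
      rw [intervalIntegral.integral_const_mul, integral_pow]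
    · intro k _
      exact (IntervalIntegrable.const_mul (intervalIntegral.intervalIntegrable_pow k) _)
  rw [hrep (xj + Δx / 2)]
  simp only [hf, hint, Finset.sum_range_succ, Finset.sum_range_zero]
  push_cast
  field_simp
  ring
end

section
/- If f : ℝ → ℝ is 5 times continuously differentiable, then as Δx → 0, β_0 := (13/12)(f(x-2Δx) - 2f(x-Δx) + f(x))² + (1/4)(f(x-2Δx) - 4f(x-Δx) + 3f(x))² = f'(x)²Δx² + ((13/12)f''(x)² - (2/3)f'(x)f'''(x))Δx⁴ + O(Δx⁵). -/
open Filter Asymptotics Topology Set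

private lemma idw_eq {g : ℝ → ℝ} {N : ℕ} (hg : ContDiff ℝ (N : ℕ∞) g) {s : Set ℝ}
    (hs : UniqueDiffOn ℝ s) {y : ℝ} (hy : y ∈ s) {k : ℕ} (hk : k ≤ N) :
    iteratedDerivWithin k g s y = iteratedDeriv k g y := by
  have h1 : HasFTaylorSeriesUpToOn (N : ℕ∞) g (ftaylorSeries ℝ g) s :=
    (contDiff_iff_ftaylorSeries.mp hg).hasFTaylorSeriesUpToOn s
  have h2 : ftaylorSeries ℝ g y k = iteratedFDerivWithin ℝ k g s y :=
    h1.eq_iteratedFDerivWithin_of_uniqueDiffOn (by exact_mod_cast hk) hs hy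
  rw [iteratedDerivWithin, iteratedDeriv, ← h2]
  rfl

private lemma taylor_bigO {g : ℝ → ℝ} (n : ℕ) (hg : ContDiff ℝ ((n + 1 : ℕ) : ℕ∞) g) :
    (fun h : ℝ => g h - ∑ k ∈ Finset.range (n + 1),
        ((k.factorial : ℝ)⁻¹ * h ^ k) * iteratedDeriv k g 0)
      =O[𝓝[>] (0:ℝ)] fun h => h ^ (n + 1) := by
  have hg' : ContDiffOn ℝ (n + 1 : ℕ) g (Set.Icc (0:ℝ) 1) := hg.contDiffOn
  obtain ⟨C, hC⟩ := exists_taylor_mean_remainder_bound zero_le_one hg'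
  rw [isBigO_iff]
  refine ⟨C, ?_⟩
  filter_upwards [Ioo_mem_nhdsGT_of_mem (by norm_num : (0:ℝ) ∈ Set.Ico (0:ℝ) 1)] with h hh
  have hmem : h ∈ Set.Icc (0:ℝ) 1 := ⟨hh.1.le, hh.2.le⟩
  have hb := hC h hmem
  rw [taylor_within_apply] at hb
  have heq : (∑ k ∈ Finset.range (n + 1),
      (((k.factorial : ℝ))⁻¹ * (h - 0) ^ k) • iteratedDerivWithin k g (Set.Icc (0:ℝ) 1) 0)
      = ∑ k ∈ Finset.range (n + 1), ((k.factorial : ℝ)⁻¹ * h ^ k) * iteratedDeriv k g 0 := by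
    refine Finset.sum_congr rfl fun k hk => ?_
    rw [idw_eq hg (uniqueDiffOn_Icc one_pos) (Set.left_mem_Icc.mpr zero_le_one)
      (Finset.mem_range.mp hk).le, sub_zero, smul_eq_mul]
  rw [heq, sub_zero] at hb
  calc ‖g h - ∑ k ∈ Finset.range (n + 1), ((k.factorial : ℝ)⁻¹ * h ^ k) * iteratedDeriv k g 0‖
      ≤ C * h ^ (n + 1) := hb
    _ = C * ‖h ^ (n + 1)‖ := by
        rw [Real.norm_eq_abs, abs_of_nonneg (pow_nonneg hh.1.le _)]

private lemma iteratedDeriv_shift_mul {f : ℝ → ℝ} {k : ℕ} (hf : ContDiff ℝ (k : ℕ∞) f)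
    (x c : ℝ) : iteratedDeriv k (fun h : ℝ => f (x + c * h)) 0 = c ^ k * iteratedDeriv k f x := by
  have h2 : ContDiff ℝ (k : ℕ∞) (fun z : ℝ => f (x + z)) :=
    hf.comp (contDiff_const.add contDiff_id)
  have h1 : (fun h : ℝ => f (x + c * h)) = fun h : ℝ => (fun z : ℝ => f (x + z)) (c * h) := rfl
  rw [h1, iteratedDeriv_comp_const_mul h2 c]
  simp [iteratedDeriv_comp_const_add]

private lemma pow_bigO {m k : ℕ} (hk : k ≤ m) :
    (fun h : ℝ => h ^ m) =O[𝓝[>] (0:ℝ)] fun h => h ^ k := by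
  rw [isBigO_iff]
  refine ⟨1, ?_⟩
  filter_upwards [Ioo_mem_nhdsGT_of_mem (by norm_num : (0:ℝ) ∈ Set.Ico (0:ℝ) 1)] with h hh
  rw [one_mul, Real.norm_eq_abs, Real.norm_eq_abs, abs_of_nonneg (pow_nonneg hh.1.le _),
    abs_of_nonneg (pow_nonneg hh.1.le _)]
  exact pow_le_pow_of_le_one hh.1.le hh.2.le hk

theorem beta0_taylor_expansion (f : ℝ → ℝ) (hf : ContDiff ℝ 5 f) (x : ℝ) :
    (fun Δx : ℝ =>
        ((13/12) * (f (x - 2 * Δx) - 2 * f (x - Δx) + f x) ^ 2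
          + (1/4) * (f (x - 2 * Δx) - 4 * f (x - Δx) + 3 * f x) ^ 2)
        - ((deriv f x) ^ 2 * Δx ^ 2
          + ((13/12) * (iteratedDeriv 2 f x) ^ 2
              - (2/3) * deriv f x * iteratedDeriv 3 f x) * Δx ^ 4))
      =O[𝓝[>] (0 : ℝ)] fun Δx => Δx ^ 5 := by
  set l := 𝓝[>] (0 : ℝ) with hl
  have key : ∀ (c : ℝ) (n : ℕ), n + 1 ≤ 5 →
      (fun h : ℝ => f (x + c * h) - ∑ k ∈ Finset.range (n + 1),
        ((k.factorial : ℝ)⁻¹ * h ^ k) * (c ^ k * iteratedDeriv k f x))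
      =O[l] fun h => h ^ (n + 1) := by
    intro c n hn
    have hfc : ContDiff ℝ ((n + 1 : ℕ) : ℕ∞) (fun h : ℝ => f (x + c * h)) := by
      refine (hf.of_le ?_).comp (contDiff_const.add (contDiff_const.mul contDiff_id))
      show ((↑(n+1) : ℕ∞) : WithTop ℕ∞) ≤ 5
      rw [show (5 : WithTop ℕ∞) = ((5:ℕ∞) : WithTop ℕ∞) from rfl, WithTop.coe_le_coe]
      exact_mod_cast hn
    have hT := taylor_bigO n hfc
    have heq : (fun h : ℝ => f (x + c * h) - ∑ k ∈ Finset.range (n + 1),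
        ((k.factorial : ℝ)⁻¹ * h ^ k) * iteratedDeriv k (fun h : ℝ => f (x + c * h)) 0)
        = fun h : ℝ => f (x + c * h) - ∑ k ∈ Finset.range (n + 1),
        ((k.factorial : ℝ)⁻¹ * h ^ k) * (c ^ k * iteratedDeriv k f x) := by
      funext h
      congr 1
      refine Finset.sum_congr rfl fun k hk => ?_
      have hk5 : ((↑(k:ℕ) : ℕ∞) : WithTop ℕ∞) ≤ 5 := by
        have hk' : k ≤ 5 := le_trans (Finset.mem_range.mp hk).le hn
        rw [show (5 : WithTop ℕ∞) = ((5:ℕ∞) : WithTop ℕ∞) from rfl, WithTop.coe_le_coe]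
        exact_mod_cast hk'
      rw [iteratedDeriv_shift_mul (hf.of_le hk5) x c]
    exact heq ▸ hT
  have hA : (fun h : ℝ => (f (x - 2 * h) - 2 * f (x - h) + f x)
      - iteratedDeriv 2 f x * h ^ 2) =O[l] fun h => h ^ 3 := by
    have h1 := key (-2) 2 (by norm_num)
    have h2 := (key (-1) 2 (by norm_num)).const_mul_left 2
    refine (h1.sub h2).congr' (Eventually.of_forall fun h => ?_) EventuallyEq.rfl
    simp only [show ∀ h : ℝ, x + (-2) * h = x - 2 * h from fun h => by ring,
      show ∀ h : ℝ, x + (-1) * h = x - h from fun h => by ring,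
      Finset.sum_range_succ, Finset.sum_range_zero, Nat.factorial, iteratedDeriv_one,
      iteratedDeriv_zero]
    push_cast
    ring
  have hB : (fun h : ℝ => (f (x - 2 * h) - 4 * f (x - h) + 3 * f x)
      - (2 * deriv f x * h - (2/3) * iteratedDeriv 3 f x * h ^ 3)) =O[l] fun h => h ^ 4 := by
    have h1 := key (-2) 3 (by norm_num)
    have h2 := (key (-1) 3 (by norm_num)).const_mul_left 4
    refine (h1.sub h2).congr' (Eventually.of_forall fun h => ?_) EventuallyEq.rfl
    simp only [show ∀ h : ℝ, x + (-2) * h = x - 2 * h from fun h => by ring,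
      show ∀ h : ℝ, x + (-1) * h = x - h from fun h => by ring,
      Finset.sum_range_succ, Finset.sum_range_zero, Nat.factorial, iteratedDeriv_one,
      iteratedDeriv_zero]
    push_cast
    ring
  set d1 := deriv f x
  set d2 := iteratedDeriv 2 f x
  set d3 := iteratedDeriv 3 f x
  set A := fun h : ℝ => f (x - 2 * h) - 2 * f (x - h) + f x with hAdef
  set B := fun h : ℝ => f (x - 2 * h) - 4 * f (x - h) + 3 * f x with hBdef
  -- A + p is O(h^2)
  have hApp : (fun h : ℝ => A h + d2 * h ^ 2) =O[l] fun h => h ^ 2 := by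
    have e : (fun h : ℝ => A h + d2 * h ^ 2)
        = fun h : ℝ => (A h - d2 * h ^ 2) + 2 * d2 * h ^ 2 := by funext h; ring
    rw [e]
    exact (hA.trans (pow_bigO (by norm_num))).add
      ((isBigO_refl (fun h : ℝ => h ^ 2) l).const_mul_left (2 * d2))
  have hBpq : (fun h : ℝ => B h + (2 * d1 * h - (2/3) * d3 * h ^ 3)) =O[l]
      fun h => h ^ 1 := by
    have e : (fun h : ℝ => B h + (2 * d1 * h - (2/3) * d3 * h ^ 3))
        = fun h : ℝ => ((B h - (2 * d1 * h - (2/3) * d3 * h ^ 3)) + (4 * d1) * h ^ 1)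
            - ((4/3) * d3) * h ^ 3 := by funext h; ring
    rw [e]
    exact ((hB.trans (pow_bigO (by norm_num))).add
      ((isBigO_refl (fun h : ℝ => h ^ 1) l).const_mul_left (4 * d1))).sub
      (((isBigO_refl (fun h : ℝ => h ^ 3) l).const_mul_left ((4/3) * d3)).trans
        (pow_bigO (by norm_num)))
  have prod1 : (fun h : ℝ => (A h - d2 * h ^ 2) * (A h + d2 * h ^ 2)) =O[l]
      fun h => h ^ 5 := by
    have := hA.mul hApp
    have e : (fun h : ℝ => h ^ 3 * h ^ 2) = fun h : ℝ => h ^ 5 := by funext h; ring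
    exact e ▸ this
  have prod2 : (fun h : ℝ => (B h - (2 * d1 * h - (2/3) * d3 * h ^ 3))
      * (B h + (2 * d1 * h - (2/3) * d3 * h ^ 3))) =O[l] fun h => h ^ 5 := by
    have := hB.mul hBpq
    have e : (fun h : ℝ => h ^ 4 * h ^ 1) = fun h : ℝ => h ^ 5 := by funext h; ring
    exact e ▸ this
  have t3 : (fun h : ℝ => (1/9) * d3 ^ 2 * h ^ 6) =O[l] fun h => h ^ 5 :=
    ((isBigO_refl (fun h : ℝ => h ^ 6) l).const_mul_left ((1/9) * d3 ^ 2)).trans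
      (pow_bigO (by norm_num))
  have total := ((prod1.const_mul_left (13/12)).add (prod2.const_mul_left (1/4))).add t3
  refine total.congr' (Eventually.of_forall fun h => ?_) EventuallyEq.rfl
  simp only [hAdef, hBdef]
  ring
end

section
/- If f : ℝ → ℝ is 6 times continuously differentiable, then as Δx → 0, β_1 := (13/12)(f(x-Δx) - 2f(x) + f(x+Δx))² + (1/4)(f(x+Δx) - f(x-Δx))² = f'(x)²Δx² + ((13/12)f''(x)² + (1/3)f'(x)f'''(x))Δx⁴ + O(Δx⁶). -/
set_option maxHeartbeats 1000000


open Filter Asymptotics Topology Set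

private lemma iterWithin_eq (g : ℝ → ℝ) (hg : ContDiff ℝ 6 g) {s : Set ℝ}
    (hs : UniqueDiffOn ℝ s) {y : ℝ} (hy : y ∈ s) (k : ℕ) (hk : k ≤ 6) :
    iteratedDerivWithin k g s y = iteratedDeriv k g y := by
  rw [iteratedDerivWithin_eq_iteratedFDerivWithin, iteratedDeriv_eq_iteratedFDeriv]
  congr 1
  exact (((contDiff_iff_ftaylorSeries.mp hg).hasFTaylorSeriesUpToOn
    s).eq_iteratedFDerivWithin_of_uniqueDiffOn (by exact_mod_cast hk) hs hy).symm

private lemma taylor6 (g : ℝ → ℝ) (hg : ContDiff ℝ 6 g) :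
    (fun h : ℝ => g h - ∑ k ∈ Finset.range 6, ((Nat.factorial k : ℕ) : ℝ)⁻¹ * h ^ k * iteratedDeriv k g 0)
      =O[𝓝[>] (0 : ℝ)] fun h => h ^ 6 := by
  have hcd : ContDiffOn ℝ ((5 : ℕ) + 1) g (Set.Icc (0:ℝ) 1) := by
    exact_mod_cast (hg.of_le (by norm_num)).contDiffOn
  obtain ⟨C, hC⟩ := exists_taylor_mean_remainder_bound (n := 5) zero_le_one hcd
  rw [Asymptotics.isBigO_iff]
  refine ⟨C, ?_⟩
  filter_upwards [Ioc_mem_nhdsGT_of_mem (by constructor <;> norm_num : (0:ℝ) ∈ Set.Ico (0:ℝ) 1)]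
    with y hy
  have hy' : y ∈ Set.Icc (0:ℝ) 1 := ⟨hy.1.le, hy.2⟩
  have h1 := hC y hy'
  have h2 : taylorWithinEval g 5 (Set.Icc (0:ℝ) 1) 0 y
      = ∑ k ∈ Finset.range 6, ((Nat.factorial k : ℕ) : ℝ)⁻¹ * y ^ k * iteratedDeriv k g 0 := by
    rw [taylor_within_apply]
    refine Finset.sum_congr rfl fun k hk => ?_
    rw [iterWithin_eq g hg (uniqueDiffOn_Icc zero_lt_one) (Set.left_mem_Icc.mpr zero_le_one) k
      (by have := Finset.mem_range.mp hk; omega)]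
    rw [smul_eq_mul]; ring
  rw [h2] at h1
  have : ‖y ^ 6‖ = y ^ 6 := by
    rw [Real.norm_eq_abs, abs_of_nonneg (by positivity)]
  rw [Real.norm_eq_abs, this]
  calc |g y - ∑ k ∈ Finset.range 6, ((Nat.factorial k : ℕ) : ℝ)⁻¹ * y ^ k * iteratedDeriv k g 0|
      ≤ C * (y - 0) ^ (5 + 1) := h1
    _ = C * y ^ 6 := by ring

theorem beta1_taylor_expansion (f : ℝ → ℝ) (hf : ContDiff ℝ 6 f) (x : ℝ) :
    (fun Δx : ℝ =>
        ((13/12) * (f (x - Δx) - 2 * f x + f (x + Δx)) ^ 2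
          + (1/4) * (f (x + Δx) - f (x - Δx)) ^ 2)
        - ((deriv f x) ^ 2 * Δx ^ 2
          + ((13/12) * (iteratedDeriv 2 f x) ^ 2
              + (1/3) * deriv f x * iteratedDeriv 3 f x) * Δx ^ 4))
      =O[𝓝[>] (0 : ℝ)] fun Δx => Δx ^ 6 := by
  have hgp : ContDiff ℝ 6 (fun h : ℝ => f (x + h)) :=
    hf.comp (contDiff_const.add contDiff_id)
  have hgm : ContDiff ℝ 6 (fun h : ℝ => f (x - h)) :=
    hf.comp (contDiff_const.sub contDiff_id)
  -- abbreviations for derivatives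
  set A0 := f x with hA0
  set A1 := deriv f x with hA1
  set A2 := iteratedDeriv 2 f x with hA2
  set A3 := iteratedDeriv 3 f x with hA3
  set A4 := iteratedDeriv 4 f x with hA4
  set A5 := iteratedDeriv 5 f x with hA5
  have hup : ∀ k : ℕ, iteratedDeriv k (fun h : ℝ => f (x + h)) 0 = iteratedDeriv k f x := by
    intro k
    have := congrFun (iteratedDeriv_comp_const_add k f x) 0
    simpa using this
  have hum : ∀ k : ℕ, iteratedDeriv k (fun h : ℝ => f (x - h)) 0
      = (-1 : ℝ) ^ k * iteratedDeriv k f x := by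
    intro k
    have heq : (fun h : ℝ => f (x - h)) = fun h : ℝ => (fun z : ℝ => f (x + z)) (-h) := by
      funext h; simp [sub_eq_add_neg]
    rw [heq, iteratedDeriv_comp_neg k (fun z : ℝ => f (x + z)) 0]
    simp [hup, smul_eq_mul]
  -- Taylor polynomials
  set P : ℝ → ℝ := fun h => A0 + h * A1 + h^2/2 * A2 + h^3/6 * A3 + h^4/24 * A4 + h^5/120 * A5
    with hP
  set Q : ℝ → ℝ := fun h => A0 - h * A1 + h^2/2 * A2 - h^3/6 * A3 + h^4/24 * A4 - h^5/120 * A5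
    with hQ
  have hsum : ∀ h : ℝ, ∑ k ∈ Finset.range 6,
      ((Nat.factorial k : ℕ) : ℝ)⁻¹ * h ^ k * iteratedDeriv k (fun h : ℝ => f (x + h)) 0 = P h := by
    intro h
    simp only [Finset.sum_range_succ, Finset.sum_range_zero, hup]
    rw [hP]
    simp only [iteratedDeriv_zero, iteratedDeriv_one, ← hA0, ← hA1, ← hA2, ← hA3, ← hA4, ← hA5]
    norm_num [Nat.factorial]
    ring
  have hsum' : ∀ h : ℝ, ∑ k ∈ Finset.range 6,
      ((Nat.factorial k : ℕ) : ℝ)⁻¹ * h ^ k * iteratedDeriv k (fun h : ℝ => f (x - h)) 0 = Q h := by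
    intro h
    simp only [Finset.sum_range_succ, Finset.sum_range_zero, hum]
    rw [hQ]
    simp only [iteratedDeriv_zero, iteratedDeriv_one, ← hA0, ← hA1, ← hA2, ← hA3, ← hA4, ← hA5]
    norm_num [Nat.factorial]
    ring
  have hu : (fun h : ℝ => f (x + h) - P h) =O[𝓝[>] (0:ℝ)] fun h => h ^ 6 :=
    (taylor6 _ hgp).congr (fun h => by rw [hsum h]) fun _ => rfl
  have hv : (fun h : ℝ => f (x - h) - Q h) =O[𝓝[>] (0:ℝ)] fun h => h ^ 6 :=
    (taylor6 _ hgm).congr (fun h => by rw [hsum' h]) fun _ => rfl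
  -- continuous functions are O(1)
  have hO1 : ∀ g : ℝ → ℝ, Continuous g → g =O[𝓝[>] (0:ℝ)] fun _ => (1:ℝ) := fun g hg =>
    ((hg.tendsto 0).mono_left nhdsWithin_le_nhds).isBigO_one ℝ
  have h6O1 : (fun h : ℝ => h ^ 6) =O[𝓝[>] (0:ℝ)] fun _ => (1:ℝ) := hO1 _ (continuous_pow 6)
  have huO1 : (fun h : ℝ => f (x + h) - P h) =O[𝓝[>] (0:ℝ)] fun _ => (1:ℝ) := hu.trans h6O1
  have hvO1 : (fun h : ℝ => f (x - h) - Q h) =O[𝓝[>] (0:ℝ)] fun _ => (1:ℝ) := hv.trans h6O1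
  -- coefficient functions
  set c1 : ℝ → ℝ := fun h => 13/6*(A2*h^2 + A4*h^4/12) + 1/2*(2*A1*h + A3*h^3/3 + A5*h^5/60)
    with hc1
  set c2 : ℝ → ℝ := fun h => 13/6*(A2*h^2 + A4*h^4/12) - 1/2*(2*A1*h + A3*h^3/3 + A5*h^5/60)
    with hc2
  set w : ℝ → ℝ := fun h => 13/72*A2*A4 + A1*A5/60 + A3^2/36
      + (13/1728*A4^2 + A3*A5/360)*h^2 + A5^2/14400*h^4 with hw
  have hc1O : c1 =O[𝓝[>] (0:ℝ)] fun _ => (1:ℝ) := hO1 _ (by rw [hc1]; fun_prop)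
  have hc2O : c2 =O[𝓝[>] (0:ℝ)] fun _ => (1:ℝ) := hO1 _ (by rw [hc2]; fun_prop)
  have hwO : w =O[𝓝[>] (0:ℝ)] fun _ => (1:ℝ) := hO1 _ (by rw [hw]; fun_prop)
  have hU : (fun h : ℝ => c1 h + (4/3) * (f (x + h) - P h) + (5/6) * (f (x - h) - Q h))
      =O[𝓝[>] (0:ℝ)] fun _ => (1:ℝ) :=
    (hc1O.add (huO1.const_mul_left _)).add (hvO1.const_mul_left _)
  have hV : (fun h : ℝ => c2 h + (5/6) * (f (x + h) - P h) + (4/3) * (f (x - h) - Q h))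
      =O[𝓝[>] (0:ℝ)] fun _ => (1:ℝ) :=
    (hc2O.add (huO1.const_mul_left _)).add (hvO1.const_mul_left _)
  have key : (fun Δx : ℝ =>
        ((13/12) * (f (x - Δx) - 2 * f x + f (x + Δx)) ^ 2
          + (1/4) * (f (x + Δx) - f (x - Δx)) ^ 2)
        - ((deriv f x) ^ 2 * Δx ^ 2
          + ((13/12) * (iteratedDeriv 2 f x) ^ 2
              + (1/3) * deriv f x * iteratedDeriv 3 f x) * Δx ^ 4))
      = fun h : ℝ => h ^ 6 * w h
        + ((c1 h + (4/3) * (f (x + h) - P h) + (5/6) * (f (x - h) - Q h)) * (f (x + h) - P h)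
          + (c2 h + (5/6) * (f (x + h) - P h) + (4/3) * (f (x - h) - Q h)) * (f (x - h) - Q h))
      := by
    funext h
    rw [hw, hc1, hc2, hP, hQ, ← hA0, ← hA1, ← hA2, ← hA3]
    ring
  rw [key]
  have piece1 : (fun h : ℝ => h ^ 6 * w h) =O[𝓝[>] (0:ℝ)] fun h => h ^ 6 := by
    have := (isBigO_refl (fun h : ℝ => h ^ 6) (𝓝[>] (0:ℝ))).mul hwO
    simpa using this
  have piece2 : (fun h : ℝ =>
      (c1 h + (4/3) * (f (x + h) - P h) + (5/6) * (f (x - h) - Q h)) * (f (x + h) - P h))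
      =O[𝓝[>] (0:ℝ)] fun h => h ^ 6 := by
    have := hU.mul hu
    simpa using this
  have piece3 : (fun h : ℝ =>
      (c2 h + (5/6) * (f (x + h) - P h) + (4/3) * (f (x - h) - Q h)) * (f (x - h) - Q h))
      =O[𝓝[>] (0:ℝ)] fun h => h ^ 6 := by
    have := hV.mul hv
    simpa using this
  exact piece1.add (piece2.add piece3)
end

section
/- If f : ℝ → ℝ is 6 times continuously differentiable near x_j, f'(x_j) ≠ 0, and f''(x_j)f'''(x_j) ≠ 0, then for each k ∈ {0,1,2}, τ^Z/β_k = O(Δx³) as Δx → 0, and consequently the WENO-Z nonlinear weights ω^Z_k = α^Z_k / Σ_l α^Z_l with α^Z_k = γ_k(1 + τ^Z/β_k) satisfy ω^Z_k = γ_k + O(Δx³). -/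
/-!
Taylor expansion with Peano remainder shows that a stencil `∑ wᵢ f (x + sᵢ h)` whose weights
annihilate the polynomials of degree `< n` is `O(hⁿ)`. Write `β_k = 13/12 U_k² + 1/4 V_k²`. Then
`β₀ - β₂ = 13/12 (U₀ - U₂)(U₀ + U₂) + 1/4 (V₀ - V₂)(V₀ + V₂)`, and these four stencils are
`O(h³)`, `O(h²)`, `O(h)`, `O(h⁴)`, so `τ^Z = O(h⁵)`. Each `V_k` is `±2 f'(x) h + o(h)`, so
`β_k ≥ V_k² / 4` is bounded below by a multiple of `h²` and `τ^Z / β_k = O(h³)`. Finally, with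
`r_k = τ^Z / β_k`, `ω_k - γ_k = γ_k (r_k - ∑ γ_l r_l) / (1 + ∑ γ_l r_l)`.
-/

open Filter Asymptotics Topology

open Nat in
theorem ContDiffAt.taylor_isLittleO {E : Type*} [NormedAddCommGroup E] [NormedSpace ℝ E]
    {f : ℝ → E} {x : ℝ} {n : ℕ} (hf : ContDiffAt ℝ n f x) :
    (fun y => f y - ∑ k ∈ Finset.range (n + 1), ((k ! : ℝ)⁻¹ * (y - x) ^ k) • iteratedDeriv k f x)
      =o[𝓝 x] fun y => (y - x) ^ n := by
  obtain ⟨u, hu, hfu⟩ := hf.contDiffOn (m := n) le_rfl (by simp)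
  obtain ⟨ε, hε, hball⟩ := Metric.mem_nhds_iff.mp hu
  have hx : x ∈ Metric.ball x ε := Metric.mem_ball_self hε
  have h := _root_.taylor_isLittleO (convex_ball x ε) hx (hfu.mono hball)
  rw [Metric.isOpen_ball.nhdsWithin_eq hx] at h
  refine h.congr_left fun y => ?_
  simp only [taylor_within_apply, iteratedDerivWithin_of_isOpen Metric.isOpen_ball hx]

theorem Asymptotics.IsLittleO.comp_add_mul {E : Type*} [NormedAddCommGroup E] {R : ℝ → E}
    {x : ℝ} {n : ℕ} (hR : R =o[𝓝 x] fun y => (y - x) ^ n) (m : ℝ) :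
    (fun h => R (x + m * h)) =o[𝓝 0] fun h => h ^ n := by
  have hlim : Tendsto (fun h => x + m * h) (𝓝 0) (𝓝 x) := by
    have : Continuous fun h : ℝ => x + m * h := by fun_prop
    simpa using this.tendsto 0
  refine (hR.comp_tendsto hlim).trans_isBigO ?_
  simpa only [Function.comp_def, add_sub_cancel_left, mul_pow] using
    isBigO_const_mul_self (m ^ n) (fun h : ℝ => h ^ n) _

namespace Asymptotics

theorem IsLittleO.isBigO_of_sub_const_mul {α : Type*} {l : Filter α} {u g : α → ℝ} {c : ℝ}
    (hc : c ≠ 0) (h : (fun a => u a - c * g a) =o[l] g) : g =O[l] u :=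
  (isBigO_self_const_mul hc g l).trans
    ((((isLittleO_const_mul_right_iff hc).mpr h).right_isBigO_add).congr_right
      fun _ => sub_add_cancel _ _)

theorem IsBigO.div_of_isBigO_mul {α 𝕜 : Type*} [NormedField 𝕜] {l : Filter α} {u g k v : α → 𝕜}
    (hu : u =O[l] fun a => g a * k a) (hk : k =O[l] v) : (fun a => u a / v a) =O[l] g := by
  have hdiv : (fun a => u a / v a) =O[l] fun a => g a * v a / v a := by
    simpa only [div_eq_mul_inv] using
      (hu.trans ((isBigO_refl g l).mul hk)).mul (isBigO_refl (fun a => (v a)⁻¹) l)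
  refine hdiv.trans (IsBigO.of_bound 1 (Eventually.of_forall fun a => ?_))
  rcases eq_or_ne (v a) 0 with hv | hv <;> simp [hv]

end Asymptotics

section Stencil

variable {ι : Type*} [Fintype ι]

open Nat in
theorem stencil_sub_isLittleO {f : ℝ → ℝ} {x : ℝ} {n : ℕ} (hf : ContDiffAt ℝ n f x)
    (w s : ι → ℝ) (hmom : ∀ j < n, ∑ i, w i * s i ^ j = 0) :
    (fun h => ∑ i, w i * f (x + s i * h)
        - (∑ i, w i * s i ^ n) * iteratedDeriv n f x / n ! * h ^ n) =o[𝓝 0] fun h => h ^ n := by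
  set T : ℝ → ℝ := fun y =>
    ∑ k ∈ Finset.range (n + 1), ((k ! : ℝ)⁻¹ * (y - x) ^ k) • iteratedDeriv k f x
  have hT : ∀ h, ∑ i, w i * T (x + s i * h)
      = (∑ i, w i * s i ^ n) * iteratedDeriv n f x / n ! * h ^ n := by
    intro h
    have hterm : ∀ k, ∑ i, w i * (((k ! : ℝ)⁻¹ * (s i * h) ^ k) * iteratedDeriv k f x)
        = (∑ i, w i * s i ^ k) * ((k ! : ℝ)⁻¹ * h ^ k * iteratedDeriv k f x) := fun k => by
      rw [Finset.sum_mul]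
      exact Finset.sum_congr rfl fun i _ => by ring
    simp only [T, add_sub_cancel_left, smul_eq_mul, Finset.mul_sum]
    rw [Finset.sum_comm, Finset.sum_range_succ, Finset.sum_eq_zero fun k hk => by
      rw [hterm, hmom k (Finset.mem_range.1 hk), zero_mul], hterm]
    ring
  have hR : ∀ i, (fun h => w i * (f (x + s i * h) - T (x + s i * h))) =o[𝓝 0] fun h => h ^ n :=
    fun i => (hf.taylor_isLittleO.comp_add_mul (s i)).const_mul_left (w i)
  refine (IsLittleO.fun_sum (s := Finset.univ) fun i _ => hR i).congr_left fun h => ?_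
  simp only [mul_sub, Finset.sum_sub_distrib, hT]

open Nat in
theorem stencil_isBigO {f : ℝ → ℝ} {x : ℝ} {n : ℕ} (hf : ContDiffAt ℝ n f x)
    (w s : ι → ℝ) (hmom : ∀ j < n, ∑ i, w i * s i ^ j = 0) :
    (fun h => ∑ i, w i * f (x + s i * h)) =O[𝓝 0] fun h => h ^ n :=
  ((stencil_sub_isLittleO hf w s hmom).isBigO.add
    (isBigO_const_mul_self ((∑ i, w i * s i ^ n) * iteratedDeriv n f x / n !) _ _)).congr_left
    fun _ => sub_add_cancel _ _

theorem isBigO_stencil_of_moment_ne_zero {f : ℝ → ℝ} {x : ℝ} (hf : ContDiffAt ℝ 1 f x)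
    (hf' : deriv f x ≠ 0) (w s : ι → ℝ) (h0 : ∑ i, w i = 0) (h1 : ∑ i, w i * s i ≠ 0) :
    (fun h : ℝ => h) =O[𝓝 0] fun h => ∑ i, w i * f (x + s i * h) := by
  refine IsLittleO.isBigO_of_sub_const_mul (mul_ne_zero h1 hf') ?_
  simpa [iteratedDeriv_one] using stencil_sub_isLittleO (n := 1) (by simpa using hf) w s
    (by simpa using h0)

end Stencil

theorem normalized_weights_sub_isBigO {α ι : Type*} [Fintype ι] {l : Filter α} {γ : ι → ℝ}
    (hγ : ∑ i, γ i = 1) {r : α → ι → ℝ} {g : α → ℝ} (hr : ∀ i, (fun a => r a i) =O[l] g)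
    (hg : Tendsto g l (𝓝 0)) (k : ι) :
    (fun a => γ k * (1 + r a k) / ∑ i, γ i * (1 + r a i) - γ k) =O[l] g := by
  have hS : ∀ a, ∑ i, γ i * (1 + r a i) = 1 + ∑ i, γ i * r a i := fun a => by
    simp only [mul_add, mul_one, Finset.sum_add_distrib, hγ]
  have hSlim : Tendsto (fun a => ∑ i, γ i * (1 + r a i)) l (𝓝 1) := by
    simp only [hS]
    simpa using tendsto_const_nhds.add
      (tendsto_finsetSum Finset.univ fun i _ => ((hr i).trans_tendsto hg).const_mul (γ i))
  have hnum : (fun a => γ k * (r a k - ∑ i, γ i * r a i)) =O[l] g :=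
    ((hr k).sub (IsBigO.fun_sum fun i _ => (hr i).const_mul_left (γ i))).const_mul_left (γ k)
  have hinv : (fun a => (∑ i, γ i * (1 + r a i))⁻¹) =O[l] fun _ => (1 : ℝ) :=
    (hSlim.inv₀ one_ne_zero).isBigO_one ℝ
  refine (hnum.mul hinv).congr' ?_ (Eventually.of_forall fun _ => mul_one _)
  filter_upwards [hSlim.eventually_ne one_ne_zero] with a ha
  rw [hS] at ha ⊢
  field_simp
  ring

def jsSecondDiff (f : ℝ → ℝ) (x h : ℝ) : Fin 3 → ℝ :=
  ![f (x - 2 * h) - 2 * f (x - h) + f x, f (x - h) - 2 * f x + f (x + h),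
    f x - 2 * f (x + h) + f (x + 2 * h)]

def jsFirstDiff (f : ℝ → ℝ) (x h : ℝ) : Fin 3 → ℝ :=
  ![f (x - 2 * h) - 4 * f (x - h) + 3 * f x, f (x + h) - f (x - h),
    3 * f x - 4 * f (x + h) + f (x + 2 * h)]

noncomputable def jsIndicator (f : ℝ → ℝ) (x h : ℝ) (k : Fin 3) : ℝ :=
  13 / 12 * jsSecondDiff f x h k ^ 2 + 1 / 4 * jsFirstDiff f x h k ^ 2

section Indicators

variable {f : ℝ → ℝ} {x : ℝ}

theorem isBigO_jsFirstDiff (hf : ContDiffAt ℝ 1 f x) (hf' : deriv f x ≠ 0) (k : Fin 3) :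
    (fun h : ℝ => h) =O[𝓝 0] fun h => jsFirstDiff f x h k := by
  match k with
  | 0 =>
    exact (isBigO_stencil_of_moment_ne_zero hf hf' ![1, -4, 3] ![-2, -1, 0]
        (by norm_num [Fin.sum_univ_succ]) (by norm_num [Fin.sum_univ_succ])).congr_right
        fun h => by simp only [Fin.sum_univ_three, Matrix.cons_val, jsFirstDiff]; ring_nf
  | 1 =>
    exact (isBigO_stencil_of_moment_ne_zero hf hf' ![1, -1] ![1, -1]
        (by norm_num [Fin.sum_univ_succ]) (by norm_num [Fin.sum_univ_succ])).congr_right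
        fun h => by simp only [Fin.sum_univ_two, Matrix.cons_val, jsFirstDiff]; ring_nf
  | 2 =>
    exact (isBigO_stencil_of_moment_ne_zero hf hf' ![3, -4, 1] ![0, 1, 2]
        (by norm_num [Fin.sum_univ_succ]) (by norm_num [Fin.sum_univ_succ])).congr_right
        fun h => by simp only [Fin.sum_univ_three, Matrix.cons_val, jsFirstDiff]; ring_nf

theorem sq_isBigO_jsIndicator (hf : ContDiffAt ℝ 1 f x) (hf' : deriv f x ≠ 0) (k : Fin 3) :
    (fun h : ℝ => h ^ 2) =O[𝓝 0] fun h => jsIndicator f x h k := by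
  refine ((isBigO_jsFirstDiff hf hf' k).pow 2).trans (IsBigO.of_bound 4 ?_)
  filter_upwards with h
  simp only [jsIndicator, Real.norm_eq_abs]
  rw [abs_of_nonneg (by positivity), abs_of_nonneg (by positivity)]
  nlinarith [sq_nonneg (jsSecondDiff f x h k)]

theorem jsIndicator_zero_sub_two_isBigO (hf : ContDiffAt ℝ 4 f x) :
    (fun h => jsIndicator f x h 0 - jsIndicator f x h 2) =O[𝓝 0] fun h => h ^ 5 := by
  have hU_sub : (fun h => jsSecondDiff f x h 0 - jsSecondDiff f x h 2) =O[𝓝 0] fun h => h ^ 3 :=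
    (stencil_isBigO (hf.of_le (by norm_num)) ![1, -2, 2, -1] ![-2, -1, 1, 2] fun j hj => by
      interval_cases j <;> norm_num [Fin.sum_univ_succ]).congr_left
      fun h => by simp only [Fin.sum_univ_four, Matrix.cons_val, jsSecondDiff]; ring_nf
  have hU_add : (fun h => jsSecondDiff f x h 0 + jsSecondDiff f x h 2) =O[𝓝 0] fun h => h ^ 2 :=
    (stencil_isBigO (hf.of_le (by norm_num)) ![1, -2, 2, -2, 1] ![-2, -1, 0, 1, 2] fun j hj => by
      interval_cases j <;> norm_num [Fin.sum_univ_succ]).congr_left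
      fun h => by simp only [Fin.sum_univ_five, Matrix.cons_val, jsSecondDiff]; ring_nf
  have hV_sub : (fun h => jsFirstDiff f x h 0 - jsFirstDiff f x h 2) =O[𝓝 0] fun h => h ^ 1 :=
    (stencil_isBigO (hf.of_le (by norm_num)) ![1, -4, 4, -1] ![-2, -1, 1, 2] fun j hj => by
      interval_cases j; norm_num [Fin.sum_univ_succ]).congr_left
      fun h => by simp only [Fin.sum_univ_four, Matrix.cons_val, jsFirstDiff]; ring_nf
  have hV_add : (fun h => jsFirstDiff f x h 0 + jsFirstDiff f x h 2) =O[𝓝 0] fun h => h ^ 4 :=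
    (stencil_isBigO hf ![1, -4, 6, -4, 1] ![-2, -1, 0, 1, 2] fun j hj => by
      interval_cases j <;> norm_num [Fin.sum_univ_succ]).congr_left
      fun h => by simp only [Fin.sum_univ_five, Matrix.cons_val, jsFirstDiff]; ring_nf
  have hU : (fun h => (jsSecondDiff f x h 0 - jsSecondDiff f x h 2)
      * (jsSecondDiff f x h 0 + jsSecondDiff f x h 2)) =O[𝓝 0] fun h => h ^ 5 :=
    (hU_sub.mul hU_add).congr_right fun h => by ring
  have hV : (fun h => (jsFirstDiff f x h 0 - jsFirstDiff f x h 2)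
      * (jsFirstDiff f x h 0 + jsFirstDiff f x h 2)) =O[𝓝 0] fun h => h ^ 5 :=
    (hV_sub.mul hV_add).congr_right fun h => by ring
  exact ((hU.const_mul_left (13 / 12)).add (hV.const_mul_left (1 / 4))).congr_left
    fun h => by simp only [jsIndicator]; ring

end Indicators

theorem wenoZ_weights_accuracy_general (f : ℝ → ℝ) (xj : ℝ) (hf : ContDiffAt ℝ 6 f xj)
    (h1 : deriv f xj ≠ 0) :
    (let β : ℝ → Fin 3 → ℝ := fun Δx => ![
      (13/12) * (f (xj - 2 * Δx) - 2 * f (xj - Δx) + f xj) ^ 2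
        + (1/4) * (f (xj - 2 * Δx) - 4 * f (xj - Δx) + 3 * f xj) ^ 2,
      (13/12) * (f (xj - Δx) - 2 * f xj + f (xj + Δx)) ^ 2
        + (1/4) * (f (xj + Δx) - f (xj - Δx)) ^ 2,
      (13/12) * (f xj - 2 * f (xj + Δx) + f (xj + 2 * Δx)) ^ 2
        + (1/4) * (3 * f xj - 4 * f (xj + Δx) + f (xj + 2 * Δx)) ^ 2];
    let τ : ℝ → ℝ := fun Δx => |β Δx 0 - β Δx 2|;
    let γ : Fin 3 → ℝ := ![1/10, 6/10, 3/10];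
    let α : ℝ → Fin 3 → ℝ := fun Δx k => γ k * (1 + τ Δx / β Δx k);
    let ω : ℝ → Fin 3 → ℝ := fun Δx k => α Δx k / ∑ l, α Δx l;
    (∀ k : Fin 3, (fun Δx => τ Δx / β Δx k) =O[𝓝[>] (0 : ℝ)] fun Δx => Δx ^ 3) ∧
    (∀ k : Fin 3, (fun Δx => ω Δx k - γ k) =O[𝓝[>] (0 : ℝ)] fun Δx => Δx ^ 3)) := by
  intro β τ γ α ω
  have hβ : ∀ h k, β h k = jsIndicator f xj h k := fun h k => by fin_cases k <;> rfl
  have hτ : τ =O[𝓝 0] fun h => h ^ 3 * h ^ 2 :=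
    ((jsIndicator_zero_sub_two_isBigO (hf.of_le (by norm_num))).abs_left.congr
      (fun h => by simp only [τ, hβ]) fun h => by ring)
  have hβ_lower : ∀ k, (fun h : ℝ => h ^ 2) =O[𝓝 0] fun h => β h k := fun k => by
    simpa only [hβ] using sq_isBigO_jsIndicator (hf.of_le (by norm_num)) h1 k
  have hratio : ∀ k, (fun h => τ h / β h k) =O[𝓝[>] 0] fun h => h ^ 3 := fun k =>
    (hτ.div_of_isBigO_mul (hβ_lower k)).mono nhdsWithin_le_nhds
  have hcube : Tendsto (fun h : ℝ => h ^ 3) (𝓝[>] 0) (𝓝 0) :=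
    ((continuous_pow 3).tendsto' 0 0 (zero_pow three_ne_zero)).mono_left nhdsWithin_le_nhds
  exact ⟨hratio, normalized_weights_sub_isBigO (by norm_num [γ, Fin.sum_univ_succ]) hratio hcube⟩

theorem wenoZ_weights_accuracy (f : ℝ → ℝ) (xj : ℝ) (hf : ContDiffAt ℝ 6 f xj)
    (h1 : deriv f xj ≠ 0)
    (h23 : iteratedDeriv 2 f xj * iteratedDeriv 3 f xj ≠ 0) :
    (let β : ℝ → Fin 3 → ℝ := fun Δx => ![
      (13/12) * (f (xj - 2 * Δx) - 2 * f (xj - Δx) + f xj) ^ 2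
        + (1/4) * (f (xj - 2 * Δx) - 4 * f (xj - Δx) + 3 * f xj) ^ 2,
      (13/12) * (f (xj - Δx) - 2 * f xj + f (xj + Δx)) ^ 2
        + (1/4) * (f (xj + Δx) - f (xj - Δx)) ^ 2,
      (13/12) * (f xj - 2 * f (xj + Δx) + f (xj + 2 * Δx)) ^ 2
        + (1/4) * (3 * f xj - 4 * f (xj + Δx) + f (xj + 2 * Δx)) ^ 2];
    let τ : ℝ → ℝ := fun Δx => |β Δx 0 - β Δx 2|;
    let γ : Fin 3 → ℝ := ![1/10, 6/10, 3/10];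
    let α : ℝ → Fin 3 → ℝ := fun Δx k => γ k * (1 + τ Δx / β Δx k);
    let ω : ℝ → Fin 3 → ℝ := fun Δx k => α Δx k / ∑ l, α Δx l;
    (∀ k : Fin 3, (fun Δx => τ Δx / β Δx k) =O[𝓝[>] (0 : ℝ)] fun Δx => Δx ^ 3) ∧
    (∀ k : Fin 3, (fun Δx => ω Δx k - γ k) =O[𝓝[>] (0 : ℝ)] fun Δx => Δx ^ 3)) :=
  wenoZ_weights_accuracy_general f xj hf h1
end

section
/- Suppose weights ω_k ≥ 0 with Σ_{k=0}^2 ω_k = 1 satisfy ω_k - γ_k = O(Δx³) where Σγ_k = 1, the sub-stencil approximations satisfy f^k_{j±1/2} = h_{j±1/2} + O(Δx³), and the linear combinations Σγ_k f^k_{j±1/2} = h_{j±1/2} - C Δx⁵ + O(Δx⁶) with the same constant C at both interfaces. Then the flux difference (Σω_k f^k_{j+1/2} - Σω_k f^k_{j-1/2})/Δx approximates (h_{j+1/2} - h_{j-1/2})/Δx with error O(Δx⁵). -/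
/-!
Against the linear weights `γ`, the nonlinear flux at each interface differs by
`∑ (ω_k - γ_k) (f^k - h)`, since `∑ ω_k = ∑ γ_k`; this is a product of two `O(Δx³)` factors,
hence `O(Δx⁶)`. So both interface fluxes equal `h - C Δx⁵ + O(Δx⁶)`, the `C Δx⁵` terms cancel
in the difference, and dividing by `Δx` leaves `O(Δx⁵)`.
-/

open Filter Asymptotics Topology

theorem Finset.sum_mul_sub_sum_mul_of_sum_eq {ι R : Type*} [CommRing R] (s : Finset ι)
    {w g : ι → R} (hwg : ∑ k ∈ s, w k = ∑ k ∈ s, g k) (f : ι → R) (h : R) :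
    ∑ k ∈ s, w k * f k - ∑ k ∈ s, g k * f k = ∑ k ∈ s, (w k - g k) * (f k - h) := by
  have hsub : ∑ k ∈ s, (w k - g k) = 0 := by rw [Finset.sum_sub_distrib, hwg, sub_self]
  calc ∑ k ∈ s, w k * f k - ∑ k ∈ s, g k * f k
      = ∑ k ∈ s, (w k - g k) * f k - (∑ k ∈ s, (w k - g k)) * h := by
        rw [hsub, zero_mul, sub_zero, ← Finset.sum_sub_distrib]; simp only [sub_mul]
    _ = ∑ k ∈ s, (w k - g k) * (f k - h) := by
        rw [Finset.sum_mul, ← Finset.sum_sub_distrib]; simp only [mul_sub]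

namespace Asymptotics

variable {α ι 𝕜 : Type*} [Fintype ι] [NormedField 𝕜] {l : Filter α}

theorem IsBigO.sum_mul {a b : α → ι → 𝕜} {u v : α → 𝕜}
    (ha : ∀ k, (fun x => a x k) =O[l] u) (hb : ∀ k, (fun x => b x k) =O[l] v) :
    (fun x => ∑ k, a x k * b x k) =O[l] fun x => u x * v x :=
  IsBigO.fun_sum fun k _ => (ha k).mul (hb k)

theorem IsBigO.sum_mul_sub_of_weights {ω : α → ι → 𝕜} {γ : ι → 𝕜} {f : α → ι → 𝕜}
    {h e u v : α → 𝕜} (hsum : ∀ x, ∑ k, ω x k = ∑ k, γ k)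
    (hωγ : ∀ k, (fun x => ω x k - γ k) =O[l] u) (hf : ∀ k, (fun x => f x k - h x) =O[l] v)
    (hlin : (fun x => ∑ k, γ k * f x k - e x) =O[l] fun x => u x * v x) :
    (fun x => ∑ k, ω x k * f x k - e x) =O[l] fun x => u x * v x := by
  have hdiff : (fun x => ∑ k, ω x k * f x k - ∑ k, γ k * f x k) =O[l] fun x => u x * v x :=
    (IsBigO.sum_mul (a := fun x k => ω x k - γ k) (b := fun x k => f x k - h x) hωγ hf).congr_left
      fun x => (Finset.sum_mul_sub_sum_mul_of_sum_eq _ (hsum x) _ (h x)).symm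
  exact (hdiff.add hlin).congr_left fun x => by ring

theorem IsBigO.div_self_of_pow_succ {f : 𝕜 → 𝕜} {l : Filter 𝕜} {n : ℕ}
    (hf : f =O[l] fun x => x ^ (n + 1)) : (fun x => f x / x) =O[l] fun x => x ^ n := by
  simp_rw [div_eq_mul_inv]
  refine (hf.mul (isBigO_refl (fun x : 𝕜 => x⁻¹) l)).trans (IsBigO.of_bound 1 ?_)
  refine Eventually.of_forall fun x => ?_
  rcases eq_or_ne x 0 with rfl | hx
  · simp
  · rw [pow_succ, mul_inv_cancel_right₀ hx, one_mul]

end Asymptotics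

theorem weno5_sufficient_condition_general
    (ω : ℝ → Fin 3 → ℝ) (γ : Fin 3 → ℝ)
    (fp fm : ℝ → Fin 3 → ℝ) (hp hm : ℝ → ℝ) (C : ℝ)
    (hω_sum : ∀ Δx : ℝ, ∑ k, ω Δx k = 1)
    (hγ_sum : ∑ k, γ k = 1)
    (hωγ : ∀ k : Fin 3, (fun Δx => ω Δx k - γ k) =O[𝓝[>] (0 : ℝ)] fun Δx => Δx ^ 3)
    (hfp : ∀ k : Fin 3, (fun Δx => fp Δx k - hp Δx) =O[𝓝[>] (0 : ℝ)] fun Δx => Δx ^ 3)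
    (hfm : ∀ k : Fin 3, (fun Δx => fm Δx k - hm Δx) =O[𝓝[>] (0 : ℝ)] fun Δx => Δx ^ 3)
    (hlinp : (fun Δx => (∑ k, γ k * fp Δx k) - (hp Δx - C * Δx ^ 5))
      =O[𝓝[>] (0 : ℝ)] fun Δx => Δx ^ 6)
    (hlinm : (fun Δx => (∑ k, γ k * fm Δx k) - (hm Δx - C * Δx ^ 5))
      =O[𝓝[>] (0 : ℝ)] fun Δx => Δx ^ 6) :
    (fun Δx => ((∑ k, ω Δx k * fp Δx k) - (∑ k, ω Δx k * fm Δx k)) / Δx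
        - (hp Δx - hm Δx) / Δx)
      =O[𝓝[>] (0 : ℝ)] fun Δx => Δx ^ 5 := by
  have hsum : ∀ Δx, ∑ k, ω Δx k = ∑ k, γ k := fun Δx => (hω_sum Δx).trans hγ_sum.symm
  have hsix : (fun Δx : ℝ => Δx ^ 6) = fun Δx => Δx ^ 3 * Δx ^ 3 := by funext; ring
  rw [hsix] at hlinp hlinm
  have hplus := IsBigO.sum_mul_sub_of_weights hsum hωγ hfp hlinp
  have hminus := IsBigO.sum_mul_sub_of_weights hsum hωγ hfm hlinm
  have hnum : (fun Δx => ((∑ k, ω Δx k * fp Δx k) - (∑ k, ω Δx k * fm Δx k))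
      - (hp Δx - hm Δx)) =O[𝓝[>] (0 : ℝ)] fun Δx => Δx ^ 6 := by
    rw [hsix]
    exact (hplus.sub hminus).congr_left fun Δx => by ring
  simpa only [sub_div] using hnum.div_self_of_pow_succ (n := 5)

theorem weno5_sufficient_condition
    (ω : ℝ → Fin 3 → ℝ) (γ : Fin 3 → ℝ)
    (fp fm : ℝ → Fin 3 → ℝ) (hp hm : ℝ → ℝ) (C : ℝ)
    (hω_nonneg : ∀ Δx : ℝ, ∀ k : Fin 3, 0 ≤ ω Δx k)
    (hω_sum : ∀ Δx : ℝ, ∑ k, ω Δx k = 1)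
    (hγ_sum : ∑ k, γ k = 1)
    (hωγ : ∀ k : Fin 3, (fun Δx => ω Δx k - γ k) =O[𝓝[>] (0 : ℝ)] fun Δx => Δx ^ 3)
    (hfp : ∀ k : Fin 3, (fun Δx => fp Δx k - hp Δx) =O[𝓝[>] (0 : ℝ)] fun Δx => Δx ^ 3)
    (hfm : ∀ k : Fin 3, (fun Δx => fm Δx k - hm Δx) =O[𝓝[>] (0 : ℝ)] fun Δx => Δx ^ 3)
    (hlinp : (fun Δx => (∑ k, γ k * fp Δx k) - (hp Δx - C * Δx ^ 5))
      =O[𝓝[>] (0 : ℝ)] fun Δx => Δx ^ 6)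
    (hlinm : (fun Δx => (∑ k, γ k * fm Δx k) - (hm Δx - C * Δx ^ 5))
      =O[𝓝[>] (0 : ℝ)] fun Δx => Δx ^ 6) :
    (fun Δx => ((∑ k, ω Δx k * fp Δx k) - (∑ k, ω Δx k * fm Δx k)) / Δx
        - (hp Δx - hm Δx) / Δx)
      =O[𝓝[>] (0 : ℝ)] fun Δx => Δx ^ 5 :=
  weno5_sufficient_condition_general ω γ fp fm hp hm C hω_sum hγ_sum hωγ hfp hfm hlinp hlinm
end

section
/- If f : ℝ → ℝ is 9 times continuously differentiable, then τ_5 := (13/12)(f(x-2Δx)-4f(x-Δx)+6f(x)-4f(x+Δx)+f(x+2Δx))² + (-f(x-Δx)+3f(x)-3f(x+Δx)+f(x+2Δx))² satisfies τ_5 = f'''(x)²Δx⁶ + f'''(x)f⁽⁴⁾(x)Δx⁷ + ((1/2)f'''(x)f⁽⁵⁾(x) + (4/3)f⁽⁴⁾(x)²)Δx⁸ + O(Δx⁹). -/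
open Filter Asymptotics Topology Nat

lemma aux_idw (g : ℝ → ℝ) (hg : ContDiff ℝ 9 g) {k : ℕ} (hk : (k : WithTop ℕ∞) ≤ 9) :
    iteratedDerivWithin k g (Set.Icc (0:ℝ) 1) 0 = iteratedDeriv k g 0 := by
  have h1 : HasFTaylorSeriesUpToOn 9 g (ftaylorSeries ℝ g) (Set.Icc (0:ℝ) 1) :=
    (contDiff_iff_ftaylorSeries.mp hg).hasFTaylorSeriesUpToOn _
  rw [iteratedDerivWithin_eq_iteratedFDerivWithin, iteratedDeriv_eq_iteratedFDeriv,
    ← h1.eq_iteratedFDerivWithin_of_uniqueDiffOn hk (uniqueDiffOn_Icc one_pos)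
      (Set.mem_Icc.mpr ⟨le_refl 0, zero_le_one⟩)]
  rfl

lemma taylor9 (g : ℝ → ℝ) (hg : ContDiff ℝ 9 g) :
    (fun s : ℝ => g s - ∑ k ∈ Finset.range 9, iteratedDeriv k g 0 * s ^ k / (k ! : ℝ))
      =O[𝓝[>] (0:ℝ)] fun s => s ^ 9 := by
  obtain ⟨C, hC⟩ := exists_taylor_mean_remainder_bound (n := 8) zero_le_one
    (hg.contDiffOn.of_le (by norm_num))
  rw [isBigO_iff]
  refine ⟨C, ?_⟩
  filter_upwards [Ioc_mem_nhdsGT_of_mem (show (0:ℝ) ∈ Set.Ico (0:ℝ) 1 by norm_num)] with s hs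
  have hs01 : s ∈ Set.Icc (0:ℝ) 1 := ⟨hs.1.le, hs.2⟩
  have h := hC s hs01
  rw [taylor_within_apply] at h
  have hsum : (∑ k ∈ Finset.range 9, (((k !:ℝ))⁻¹ * (s - 0) ^ k) •
      iteratedDerivWithin k g (Set.Icc (0:ℝ) 1) 0)
      = ∑ k ∈ Finset.range 9, iteratedDeriv k g 0 * s ^ k / (k ! : ℝ) := by
    refine Finset.sum_congr rfl fun k hk => ?_
    have hk9 : k ≤ 9 := (Nat.le_of_lt_succ (Finset.mem_range.mp hk)).trans (by norm_num)
    rw [aux_idw g hg (by exact_mod_cast hk9)]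
    rw [smul_eq_mul]
    ring
  rw [hsum] at h
  rw [sub_zero] at h
  have : ‖s ^ 9‖ = s ^ 9 := by
    rw [Real.norm_eq_abs, abs_of_nonneg (pow_nonneg hs.1.le 9)]
  rw [this]
  exact h

lemma taylor9' (f : ℝ → ℝ) (hf : ContDiff ℝ 9 f) (x c : ℝ) :
    (fun Δx : ℝ => f (x + c * Δx)
      - ∑ k ∈ Finset.range 9, iteratedDeriv k f x * (c * Δx) ^ k / (k ! : ℝ))
      =O[𝓝[>] (0:ℝ)] fun Δx => Δx ^ 9 := by
  have hg : ContDiff ℝ 9 (fun t : ℝ => f (x + c * t)) :=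
    hf.comp (contDiff_const.add (contDiff_const.mul contDiff_id))
  have key := taylor9 _ hg
  have hD : ∀ k : ℕ, k ≤ 9 →
      iteratedDeriv k (fun t : ℝ => f (x + c * t)) 0 = c ^ k * iteratedDeriv k f x := by
    intro k hk
    have h2 : ContDiff ℝ k (fun u : ℝ => f (x + u)) :=
      (hf.of_le (by exact_mod_cast hk)).comp (contDiff_const.add contDiff_id)
    have h3 : (fun t : ℝ => f (x + c * t)) = fun t : ℝ => (fun u : ℝ => f (x + u)) (c * t) := rfl
    rw [h3, iteratedDeriv_comp_const_mul h2 c]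
    rw [iteratedDeriv_comp_const_add k f x]
    norm_num
  have heq : (fun Δx : ℝ => f (x + c * Δx)
      - ∑ k ∈ Finset.range 9, iteratedDeriv k f x * (c * Δx) ^ k / (k ! : ℝ))
      = fun s : ℝ => (fun t : ℝ => f (x + c * t)) s
        - ∑ k ∈ Finset.range 9, iteratedDeriv k (fun t : ℝ => f (x + c * t)) 0 * s ^ k / (k ! : ℝ) := by
    funext s
    congr 1
    refine Finset.sum_congr rfl fun k hk => ?_
    rw [hD k ((Nat.le_of_lt_succ (Finset.mem_range.mp hk)).trans (by norm_num)), mul_pow]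
    ring
  rw [heq]
  exact key
open Filter Asymptotics Topology Nat

set_option maxHeartbeats 2000000 in
theorem tau5_taylor_expansion (f : ℝ → ℝ) (hf : ContDiff ℝ 9 f) (x : ℝ) :
    (fun Δx : ℝ =>
        ((13/12) * (f (x - 2 * Δx) - 4 * f (x - Δx) + 6 * f x
            - 4 * f (x + Δx) + f (x + 2 * Δx)) ^ 2
          + (-f (x - Δx) + 3 * f x - 3 * f (x + Δx) + f (x + 2 * Δx)) ^ 2)
        - ((iteratedDeriv 3 f x) ^ 2 * Δx ^ 6
          + iteratedDeriv 3 f x * iteratedDeriv 4 f x * Δx ^ 7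
          + ((1/2) * iteratedDeriv 3 f x * iteratedDeriv 5 f x
              + (4/3) * (iteratedDeriv 4 f x) ^ 2) * Δx ^ 8))
      =O[𝓝[>] (0 : ℝ)] fun Δx => Δx ^ 9 := by
  set T : ℝ → ℝ := fun s => f x + iteratedDeriv 1 f x * s + iteratedDeriv 2 f x * s^2/2
      + iteratedDeriv 3 f x * s^3/6 + iteratedDeriv 4 f x * s^4/24
      + iteratedDeriv 5 f x * s^5/120 + iteratedDeriv 6 f x * s^6/720
      + iteratedDeriv 7 f x * s^7/5040 + iteratedDeriv 8 f x * s^8/40320 with hT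
  have hsum : ∀ s : ℝ,
      (∑ k ∈ Finset.range 9, iteratedDeriv k f x * s ^ k / (k ! : ℝ)) = T s := by
    intro s
    rw [hT]
    simp [Finset.sum_range_succ, Nat.factorial]
    try ring
  set R : ℝ → ℝ → ℝ := fun c Δx => f (x + c * Δx) - T (c * Δx) with hRdef
  have hr : ∀ c : ℝ, (fun Δx => R c Δx) =O[𝓝[>] (0:ℝ)] fun Δx => Δx ^ 9 := by
    intro c
    have h := taylor9' f hf x c
    simp only [hsum] at h
    exact h
  set rA : ℝ → ℝ := fun Δx => R (-2) Δx - 4 * R (-1) Δx - 4 * R 1 Δx + R 2 Δx with hrAdef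
  set rB : ℝ → ℝ := fun Δx => -R (-1) Δx - 3 * R 1 Δx + R 2 Δx with hrBdef
  have hrA : rA =O[𝓝[>] (0:ℝ)] fun Δx => Δx ^ 9 := by
    rw [hrAdef]
    exact (((hr (-2)).sub ((hr (-1)).const_mul_left 4)).sub
      ((hr 1).const_mul_left 4)).add (hr 2)
  have hrB : rB =O[𝓝[>] (0:ℝ)] fun Δx => Δx ^ 9 := by
    rw [hrBdef]
    exact ((((hr (-1)).const_mul_left (-1)).sub ((hr 1).const_mul_left 3)).add (hr 2)).congr_left
      (fun Δx => by ring)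
  set a : ℝ → ℝ := fun Δx => iteratedDeriv 4 f x * Δx^4 + iteratedDeriv 6 f x * Δx^6/6
      + iteratedDeriv 8 f x * Δx^8/80 with hadef
  set b : ℝ → ℝ := fun Δx => iteratedDeriv 3 f x * Δx^3 + iteratedDeriv 4 f x * Δx^4/2
      + iteratedDeriv 5 f x * Δx^5/4 + iteratedDeriv 6 f x * Δx^6/12
      + iteratedDeriv 7 f x * Δx^7/40 + iteratedDeriv 8 f x * Δx^8/160 with hbdef
  set q : ℝ → ℝ := fun Δx =>
      (1/4) * iteratedDeriv 4 f x * iteratedDeriv 5 f x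
      + (1/6) * iteratedDeriv 3 f x * iteratedDeriv 6 f x
      + ((1/16) * iteratedDeriv 5 f x ^ 2 + (4/9) * iteratedDeriv 4 f x * iteratedDeriv 6 f x
          + (1/20) * iteratedDeriv 3 f x * iteratedDeriv 7 f x) * Δx
      + ((1/24) * iteratedDeriv 5 f x * iteratedDeriv 6 f x
          + (1/40) * iteratedDeriv 4 f x * iteratedDeriv 7 f x
          + (1/80) * iteratedDeriv 3 f x * iteratedDeriv 8 f x) * Δx^2
      + ((1/27) * iteratedDeriv 6 f x ^ 2 + (1/80) * iteratedDeriv 5 f x * iteratedDeriv 7 f x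
          + (1/30) * iteratedDeriv 4 f x * iteratedDeriv 8 f x) * Δx^3
      + ((1/240) * iteratedDeriv 6 f x * iteratedDeriv 7 f x
          + (1/320) * iteratedDeriv 5 f x * iteratedDeriv 8 f x) * Δx^4
      + ((1/1600) * iteratedDeriv 7 f x ^ 2
          + (1/180) * iteratedDeriv 6 f x * iteratedDeriv 8 f x) * Δx^5
      + (1/3200) * iteratedDeriv 7 f x * iteratedDeriv 8 f x * Δx^6
      + (1/4800) * iteratedDeriv 8 f x ^ 2 * Δx^7 with hqdef
  -- boundedness facts
  have hcont : ∀ g : ℝ → ℝ, Continuous g → g =O[𝓝[>] (0:ℝ)] (fun _ => (1:ℝ)) := by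
    intro g hg
    exact (hg.tendsto 0 |>.mono_left nhdsWithin_le_nhds).isBigO_one ℝ
  have hq1 : q =O[𝓝[>] (0:ℝ)] (fun _ => (1:ℝ)) := by
    apply hcont; rw [hqdef]; fun_prop
  have ha1 : a =O[𝓝[>] (0:ℝ)] (fun _ => (1:ℝ)) := by
    apply hcont; rw [hadef]; fun_prop
  have hb1 : b =O[𝓝[>] (0:ℝ)] (fun _ => (1:ℝ)) := by
    apply hcont; rw [hbdef]; fun_prop
  have h91 : (fun Δx : ℝ => Δx ^ 9) =O[𝓝[>] (0:ℝ)] (fun _ => (1:ℝ)) := by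
    apply hcont; fun_prop
  -- O(Δx^9) pieces
  have hQ : (fun Δx : ℝ => Δx ^ 9 * q Δx) =O[𝓝[>] (0:ℝ)] fun Δx => Δx ^ 9 := by
    have := (isBigO_refl (fun Δx : ℝ => Δx ^ 9) (𝓝[>] (0:ℝ))).mul hq1
    simpa using this
  have tA1 : (fun Δx : ℝ => a Δx * rA Δx) =O[𝓝[>] (0:ℝ)] fun Δx => Δx ^ 9 := by
    simpa using ha1.mul hrA
  have tA2 : (fun Δx : ℝ => rA Δx * rA Δx) =O[𝓝[>] (0:ℝ)] fun Δx => Δx ^ 9 := by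
    simpa using hrA.mul (hrA.trans h91)
  have tB1 : (fun Δx : ℝ => b Δx * rB Δx) =O[𝓝[>] (0:ℝ)] fun Δx => Δx ^ 9 := by
    simpa using hb1.mul hrB
  have tB2 : (fun Δx : ℝ => rB Δx * rB Δx) =O[𝓝[>] (0:ℝ)] fun Δx => Δx ^ 9 := by
    simpa using hrB.mul (hrB.trans h91)
  -- the key algebraic identity
  have final : (fun Δx : ℝ =>
        ((13/12) * (f (x - 2 * Δx) - 4 * f (x - Δx) + 6 * f x
            - 4 * f (x + Δx) + f (x + 2 * Δx)) ^ 2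
          + (-f (x - Δx) + 3 * f x - 3 * f (x + Δx) + f (x + 2 * Δx)) ^ 2)
        - ((iteratedDeriv 3 f x) ^ 2 * Δx ^ 6
          + iteratedDeriv 3 f x * iteratedDeriv 4 f x * Δx ^ 7
          + ((1/2) * iteratedDeriv 3 f x * iteratedDeriv 5 f x
              + (4/3) * (iteratedDeriv 4 f x) ^ 2) * Δx ^ 8))
      = fun Δx : ℝ => Δx ^ 9 * q Δx
          + (13/12) * (2 * (a Δx * rA Δx) + rA Δx * rA Δx)
          + (2 * (b Δx * rB Δx) + rB Δx * rB Δx) := by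
    funext Δx
    have hfm2 : f (x - 2 * Δx) = T ((-2) * Δx) + R (-2) Δx := by
      rw [hRdef]; ring_nf
    have hfm1 : f (x - Δx) = T ((-1) * Δx) + R (-1) Δx := by
      rw [hRdef]; ring_nf
    have hfp1 : f (x + Δx) = T (1 * Δx) + R 1 Δx := by
      rw [hRdef]; ring_nf
    have hfp2 : f (x + 2 * Δx) = T (2 * Δx) + R 2 Δx := by
      rw [hRdef]; ring_nf
    rw [hfm2, hfm1, hfp1, hfp2, hrAdef, hrBdef, hadef, hbdef, hqdef, hT]
    ring
  rw [final]
  exact (hQ.add (((tA1.const_mul_left 2).add tA2).const_mul_left (13/12))).add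
    ((tB1.const_mul_left 2).add tB2)
end

section
/- If f : ℝ → ℝ is 11 times continuously differentiable, then τ_6 := (13/12)(-f(x-2Δx)+5f(x-Δx)-10f(x)+10f(x+Δx)-5f(x+2Δx)+f(x+3Δx))² + (1/4)(f(x-2Δx)-3f(x-Δx)+2f(x)+2f(x+Δx)-3f(x+2Δx)+f(x+3Δx))² satisfies τ_6 = f⁽⁴⁾(x)²Δx⁸ + f⁽⁴⁾(x)f⁽⁵⁾(x)Δx⁹ + O(Δx¹⁰). -/
open Filter Asymptotics Topology Nat

private lemma taylor6_bigO (g : ℝ → ℝ) (hg : ContDiff ℝ 6 g) :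
    (fun h : ℝ => g h - ∑ i ∈ Finset.range 6, (i ! : ℝ)⁻¹ * h ^ i * iteratedDeriv i g 0)
      =O[𝓝[>] (0 : ℝ)] fun h => h ^ 6 := by
  have hunique : UniqueDiffOn ℝ (Set.Icc (0 : ℝ) 1) := uniqueDiffOn_Icc zero_lt_one
  have hgOn : ContDiffOn ℝ ((5 : ℕ) + 1) g (Set.Icc (0 : ℝ) 1) := by
    exact_mod_cast hg.contDiffOn
  obtain ⟨C, hC⟩ := exists_taylor_mean_remainder_bound zero_le_one hgOn
  have hiter : ∀ i : ℕ, i ≤ 6 →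
      iteratedDerivWithin i g (Set.Icc (0 : ℝ) 1) 0 = iteratedDeriv i g 0 := by
    intro i hi
    have h1 : HasFTaylorSeriesUpToOn 6 g (ftaylorSeries ℝ g) (Set.Icc (0 : ℝ) 1) :=
      (contDiff_iff_ftaylorSeries.mp hg).hasFTaylorSeriesUpToOn _
    have h2 := h1.eq_iteratedFDerivWithin_of_uniqueDiffOn (by exact_mod_cast hi) hunique
      (Set.left_mem_Icc.mpr zero_le_one)
    rw [iteratedDerivWithin_eq_iteratedFDerivWithin, ← h2]
    rfl
  rw [Asymptotics.isBigO_iff]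
  refine ⟨C, ?_⟩
  filter_upwards [Ioc_mem_nhdsGT (zero_lt_one : (0:ℝ) < 1)] with h hh
  have hmem : h ∈ Set.Icc (0 : ℝ) 1 := Set.Ioc_subset_Icc_self hh
  have hbound := hC h hmem
  rw [taylor_within_apply] at hbound
  have hsum : ∑ k ∈ Finset.range (5 + 1), ((k ! : ℝ)⁻¹ * (h - 0) ^ k) •
        iteratedDerivWithin k g (Set.Icc (0 : ℝ) 1) 0
      = ∑ i ∈ Finset.range 6, (i ! : ℝ)⁻¹ * h ^ i * iteratedDeriv i g 0 := by
    refine Finset.sum_congr rfl fun i hi => ?_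
    have hi6 : i ≤ 6 := by
      have := Finset.mem_range.mp hi; omega
    rw [hiter i hi6, sub_zero, smul_eq_mul]
  rw [hsum] at hbound
  have hpos : (0 : ℝ) < h := hh.1
  calc ‖g h - ∑ i ∈ Finset.range 6, (i ! : ℝ)⁻¹ * h ^ i * iteratedDeriv i g 0‖
      ≤ C * (h - 0) ^ (5 + 1) := hbound
    _ = C * ‖h ^ 6‖ := by
        rw [sub_zero]
        norm_num [abs_of_pos hpos, abs_of_pos (pow_pos hpos 6)]

private lemma shift_bigO (f : ℝ → ℝ) (hf : ContDiff ℝ 11 f) (x : ℝ) (k : ℝ) :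
    (fun h : ℝ => f (x + k * h)
        - ∑ i ∈ Finset.range 6, (i ! : ℝ)⁻¹ * h ^ i * (k ^ i * iteratedDeriv i f x))
      =O[𝓝[>] (0 : ℝ)] fun h => h ^ 6 := by
  have hf1 : ContDiff ℝ 6 (fun z : ℝ => f (x + z)) :=
    (hf.of_le (by norm_num)).comp (contDiff_const.add contDiff_id)
  have hg : ContDiff ℝ 6 (fun t : ℝ => f (x + k * t)) :=
    hf1.comp (contDiff_const.mul contDiff_id)
  have hd : ∀ i : ℕ, i ≤ 6 →
      iteratedDeriv i (fun t : ℝ => f (x + k * t)) 0 = k ^ i * iteratedDeriv i f x := by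
    intro i hi
    have hfi : ContDiff ℝ i (fun z : ℝ => f (x + z)) := by
      refine hf1.of_le ?_
      exact_mod_cast hi
    have h1 := congrFun (iteratedDeriv_comp_const_mul hfi k) 0
    have h2 := congrFun (iteratedDeriv_comp_const_add i f x) (k * 0)
    simp only [mul_zero] at h1 h2
    rw [h1, h2, add_zero]
  have H := taylor6_bigO _ hg
  refine H.congr_left fun h => ?_
  congr 1
  refine Finset.sum_congr rfl fun i hi => ?_
  have hi6 : i ≤ 6 := by have := Finset.mem_range.mp hi; omega
  rw [hd i hi6]

theorem tau6_taylor_expansion (f : ℝ → ℝ) (hf : ContDiff ℝ 11 f) (x : ℝ) :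
    (fun Δx : ℝ =>
        ((13/12) * (-f (x - 2 * Δx) + 5 * f (x - Δx) - 10 * f x
            + 10 * f (x + Δx) - 5 * f (x + 2 * Δx) + f (x + 3 * Δx)) ^ 2
          + (1/4) * (f (x - 2 * Δx) - 3 * f (x - Δx) + 2 * f x
            + 2 * f (x + Δx) - 3 * f (x + 2 * Δx) + f (x + 3 * Δx)) ^ 2)
        - ((iteratedDeriv 4 f x) ^ 2 * Δx ^ 8
          + iteratedDeriv 4 f x * iteratedDeriv 5 f x * Δx ^ 9))
      =O[𝓝[>] (0 : ℝ)] fun Δx => Δx ^ 10 := by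
  have hE := shift_bigO f hf x
  set d4 := iteratedDeriv 4 f x with hd4
  set d5 := iteratedDeriv 5 f x with hd5
  -- the two fifth-order difference combinations
  have hA : (fun h : ℝ => (-f (x + (-2) * h) + 5 * f (x + (-1) * h) - 10 * f x
      + 10 * f (x + 1 * h) - 5 * f (x + 2 * h) + f (x + 3 * h)) - d5 * h ^ 5)
      =O[𝓝[>] (0 : ℝ)] fun h => h ^ 6 := by
    have H := (((((hE (-2)).const_mul_left (-1)).add ((hE (-1)).const_mul_left 5)).add
      ((hE 1).const_mul_left 10)).add ((hE 2).const_mul_left (-5))).add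
      ((hE 3).const_mul_left 1)
    refine H.congr_left fun h => ?_
    simp only [Finset.sum_range_succ, Finset.sum_range_zero, iteratedDeriv_zero, hd4, hd5]
    norm_num [Nat.factorial]
    ring
  have hB : (fun h : ℝ => (f (x + (-2) * h) - 3 * f (x + (-1) * h) + 2 * f x
      + 2 * f (x + 1 * h) - 3 * f (x + 2 * h) + f (x + 3 * h))
      - (2 * d4 * h ^ 4 + d5 * h ^ 5))
      =O[𝓝[>] (0 : ℝ)] fun h => h ^ 6 := by
    have H := (((((hE (-2)).const_mul_left 1).add ((hE (-1)).const_mul_left (-3))).add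
      ((hE 1).const_mul_left 2)).add ((hE 2).const_mul_left (-3))).add
      ((hE 3).const_mul_left 1)
    refine H.congr_left fun h => ?_
    simp only [Finset.sum_range_succ, Finset.sum_range_zero, iteratedDeriv_zero, hd4, hd5]
    norm_num [Nat.factorial]
    ring
  have hpow : ∀ m n : ℕ, n ≤ m →
      (fun h : ℝ => h ^ m) =O[𝓝[>] (0 : ℝ)] fun h => h ^ n := by
    intro m n hmn
    rcases eq_or_lt_of_le hmn with rfl | hlt
    · exact isBigO_refl _ _
    · exact (isLittleO_pow_pow hlt).isBigO.mono nhdsWithin_le_nhds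
  have hp2 : ∀ m n p : ℕ, p ≤ m + n →
      (fun h : ℝ => h ^ m * h ^ n) =O[𝓝[>] (0 : ℝ)] fun h => h ^ p := by
    intro m n p hp
    have := hpow (m + n) p hp
    simpa [pow_add] using this
  have T1 : (fun h : ℝ => (4/3 * d5 ^ 2) * h ^ 10) =O[𝓝[>] (0 : ℝ)] fun h => h ^ 10 :=
    (isBigO_refl _ _).const_mul_left _
  have T2 : (fun h : ℝ => (13/6 * d5) * h ^ 5 *
      ((-f (x + (-2) * h) + 5 * f (x + (-1) * h) - 10 * f x
      + 10 * f (x + 1 * h) - 5 * f (x + 2 * h) + f (x + 3 * h)) - d5 * h ^ 5))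
      =O[𝓝[>] (0 : ℝ)] fun h => h ^ 10 :=
    ((((isBigO_refl (fun h : ℝ => h ^ 5) _).const_mul_left _).mul hA)).trans
      (hp2 5 6 10 (by norm_num))
  have T3 : (fun h : ℝ => (13/12 : ℝ) *
      (((-f (x + (-2) * h) + 5 * f (x + (-1) * h) - 10 * f x
      + 10 * f (x + 1 * h) - 5 * f (x + 2 * h) + f (x + 3 * h)) - d5 * h ^ 5) *
      ((-f (x + (-2) * h) + 5 * f (x + (-1) * h) - 10 * f x
      + 10 * f (x + 1 * h) - 5 * f (x + 2 * h) + f (x + 3 * h)) - d5 * h ^ 5)))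
      =O[𝓝[>] (0 : ℝ)] fun h => h ^ 10 :=
    ((hA.mul hA).const_mul_left _).trans (hp2 6 6 10 (by norm_num))
  have hS : (fun h : ℝ => d4 * h ^ 4 + (1/2 * d5) * h ^ 5)
      =O[𝓝[>] (0 : ℝ)] fun h => h ^ 4 :=
    ((isBigO_refl (fun h : ℝ => h ^ 4) _).const_mul_left _).add
      (((isBigO_refl (fun h : ℝ => h ^ 5) _).const_mul_left _).trans
        (hpow 5 4 (by norm_num)))
  have T4 : (fun h : ℝ => (d4 * h ^ 4 + (1/2 * d5) * h ^ 5) *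
      ((f (x + (-2) * h) - 3 * f (x + (-1) * h) + 2 * f x
      + 2 * f (x + 1 * h) - 3 * f (x + 2 * h) + f (x + 3 * h))
      - (2 * d4 * h ^ 4 + d5 * h ^ 5)))
      =O[𝓝[>] (0 : ℝ)] fun h => h ^ 10 :=
    (hS.mul hB).trans (hp2 4 6 10 (by norm_num))
  have T5 : (fun h : ℝ => (1/4 : ℝ) *
      (((f (x + (-2) * h) - 3 * f (x + (-1) * h) + 2 * f x
      + 2 * f (x + 1 * h) - 3 * f (x + 2 * h) + f (x + 3 * h))
      - (2 * d4 * h ^ 4 + d5 * h ^ 5)) *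
      ((f (x + (-2) * h) - 3 * f (x + (-1) * h) + 2 * f x
      + 2 * f (x + 1 * h) - 3 * f (x + 2 * h) + f (x + 3 * h))
      - (2 * d4 * h ^ 4 + d5 * h ^ 5))))
      =O[𝓝[>] (0 : ℝ)] fun h => h ^ 10 :=
    ((hB.mul hB).const_mul_left _).trans (hp2 6 6 10 (by norm_num))
  have SUM := (((T1.add T2).add T3).add T4).add T5
  refine SUM.congr_left fun h => ?_
  have e1 : f (x + (-2) * h) = f (x - 2 * h) := congrArg f (by ring)
  have e2 : f (x + (-1) * h) = f (x - h) := congrArg f (by ring)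
  have e3 : f (x + 1 * h) = f (x + h) := congrArg f (by ring)
  rw [e1, e2, e3]
  ring
end

section
/- If f : ℝ → ℝ is 11 times continuously differentiable then τ^{NW} := (f(x-2Δx) - 5f(x-Δx) + 10f(x) - 10f(x+Δx) + 5f(x+2Δx) - f(x+3Δx))² = f⁽⁵⁾(x)²Δx¹⁰ + O(Δx¹¹) as Δx → 0. -/
/-!
The bracket is the six-point stencil `u(Δx) = ∑ cᵢ f(x + aᵢ Δx)` with weights
`c = (1, -5, 10, -10, 5, -1)` and nodes `a = (-2, -1, 0, 1, 2, 3)`. Its moments `∑ cᵢ aᵢᵏ` vanish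
for `k ≤ 4` and equal `-120 = -5!` for `k = 5`, so expanding every `f(x + aᵢ Δx)` to order five
gives `u + D Δx⁵ = O(Δx⁶)` with `D = f⁽⁵⁾(x)`. Then `u² - D² Δx¹⁰ = (u + D Δx⁵)(u - D Δx⁵)` is a
product of an `O(Δx⁶)` and an `O(Δx⁵)` term.
-/

open Filter Asymptotics Topology Finset Nat

section Stencil

variable {E : Type*} [NormedAddCommGroup E] [NormedSpace ℝ E]

theorem taylor_isBigO_pow_succ {f : ℝ → E} {n : ℕ} (hf : ContDiff ℝ (n + 1) f) (x : ℝ) :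
    (fun h => f (x + h) - ∑ k ∈ range (n + 1), (h ^ k / k !) • iteratedDeriv k f x)
      =O[𝓝 0] fun h => h ^ (n + 1) := by
  have hx : Tendsto (x + ·) (𝓝 0) (𝓝 x) := by
    simpa using (continuous_const_add x).tendsto 0
  have hrem : (fun h => f (x + h) - taylorWithinEval f (n + 1) Set.univ x (x + h))
      =O[𝓝 0] fun h => h ^ (n + 1) := by
    simpa only [Function.comp_def, add_sub_cancel_left] using
      ((taylor_isLittleO_univ (x₀ := x) (by exact_mod_cast hf)).comp_tendsto hx).isBigO
  have hlast : (fun h : ℝ => (h ^ (n + 1) / (n + 1)!) • iteratedDeriv (n + 1) f x)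
      =O[𝓝 0] fun h => h ^ (n + 1) := by
    refine IsBigO.of_bound ‖iteratedDeriv (n + 1) f x‖ (Eventually.of_forall fun h => ?_)
    rw [norm_smul, norm_div, mul_comm]
    gcongr
    exact div_le_self (norm_nonneg _) (by exact_mod_cast (n + 1).factorial_pos)
  refine (hrem.add hlast).congr_left fun h => ?_
  rw [taylor_within_apply, sum_range_succ _ (n + 1)]
  simp only [iteratedDerivWithin_univ, add_sub_cancel_left, div_eq_inv_mul]
  abel

theorem isBigO_comp_const_mul_pow {F : Type*} [Norm F] (a : ℝ) {g : ℝ → F} {n : ℕ}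
    (hg : g =O[𝓝 0] fun h => h ^ n) :
    (fun t => g (a * t)) =O[𝓝 0] fun t => t ^ n := by
  have ha : Tendsto (a * ·) (𝓝 0) (𝓝 0) := by
    simpa using (continuous_const_mul a).tendsto 0
  refine (hg.comp_tendsto ha).trans ?_
  simpa only [Function.comp_def, mul_pow] using
    (isBigO_refl (fun t : ℝ => t ^ n) _).const_mul_left (a ^ n)

theorem stencil_isBigO_pow_succ {ι : Type*} (s : Finset ι) (c a : ι → ℝ) {f : ℝ → E} {n : ℕ}
    (hf : ContDiff ℝ (n + 1) f) (x : ℝ) :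
    (fun t => ∑ i ∈ s, c i • f (x + a i * t) -
        ∑ k ∈ range (n + 1), ((∑ i ∈ s, c i * a i ^ k) * t ^ k / k !) • iteratedDeriv k f x)
      =O[𝓝 0] fun t => t ^ (n + 1) := by
  have hnode : ∀ i ∈ s, (fun t => c i • (f (x + a i * t) -
      ∑ k ∈ range (n + 1), ((a i * t) ^ k / k !) • iteratedDeriv k f x)) =O[𝓝 0]
        fun t => t ^ (n + 1) := fun i _ =>
    (isBigO_comp_const_mul_pow (a i) (taylor_isBigO_pow_succ hf x)).const_smul_left (c i)
  refine (IsBigO.sum hnode).congr_left fun t => ?_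
  simp only [Finset.sum_apply, smul_sub, sum_sub_distrib, smul_sum, smul_smul]
  rw [sum_comm]
  simp only [sum_mul, sum_div, sum_smul]
  congr 1
  refine sum_congr rfl fun k _ => sum_congr rfl fun i _ => ?_
  congr 1
  ring

end Stencil

theorem isBigO_sq_sub_sq {𝕜 : Type*} [NormedField 𝕜] {u : 𝕜 → 𝕜} {c : 𝕜} {m : ℕ}
    (hu : (fun t => u t + c * t ^ m) =O[𝓝 0] fun t => t ^ (m + 1)) :
    (fun t => u t ^ 2 - c ^ 2 * t ^ (2 * m)) =O[𝓝 0] fun t => t ^ (2 * m + 1) := by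
  have hsub : (fun t => u t - c * t ^ m) =O[𝓝 0] fun t => t ^ m :=
    ((hu.trans (isLittleO_pow_pow m.lt_succ_self).isBigO).sub
      ((isBigO_refl _ _).const_mul_left (2 * c))).congr_left fun t => by ring
  exact (hu.mul hsub).congr (fun t => by ring) (fun t => by ring)

def fifthDifference (f : ℝ → ℝ) (x h : ℝ) : ℝ :=
  f (x - 2 * h) - 5 * f (x - h) + 10 * f x - 10 * f (x + h) + 5 * f (x + 2 * h) - f (x + 3 * h)

def fifthDifferenceWeights : Fin 6 → ℝ := ![1, -5, 10, -10, 5, -1]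

def fifthDifferenceNodes : Fin 6 → ℝ := ![-2, -1, 0, 1, 2, 3]

theorem fifthDifference_eq_sum (f : ℝ → ℝ) (x h : ℝ) :
    fifthDifference f x h =
      ∑ i, fifthDifferenceWeights i • f (x + fifthDifferenceNodes i * h) := by
  simp [Fin.sum_univ_six, fifthDifference, fifthDifferenceWeights, fifthDifferenceNodes,
    ← sub_eq_add_neg]

theorem sum_fifthDifferenceWeights_mul_pow_of_lt {k : ℕ} (hk : k < 5) :
    ∑ i, fifthDifferenceWeights i * fifthDifferenceNodes i ^ k = 0 := by
  interval_cases k <;> norm_num [Fin.sum_univ_succ, fifthDifferenceWeights, fifthDifferenceNodes]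

theorem sum_fifthDifferenceWeights_mul_pow_five :
    ∑ i, fifthDifferenceWeights i * fifthDifferenceNodes i ^ 5 = -120 := by
  norm_num [Fin.sum_univ_succ, fifthDifferenceWeights, fifthDifferenceNodes]

theorem isBigO_fifthDifference_add {f : ℝ → ℝ} (hf : ContDiff ℝ 6 f) (x : ℝ) :
    (fun h => fifthDifference f x h + iteratedDeriv 5 f x * h ^ 5) =O[𝓝 0] fun h => h ^ 6 := by
  refine (stencil_isBigO_pow_succ univ fifthDifferenceWeights fifthDifferenceNodes (n := 5) hf x
    ).congr_left fun h => ?_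
  rw [fifthDifference_eq_sum, sum_range_succ, sum_fifthDifferenceWeights_mul_pow_five,
    sum_eq_zero (s := range 5) fun k hk => by
      rw [sum_fifthDifferenceWeights_mul_pow_of_lt (mem_range.mp hk), zero_mul, zero_div, zero_smul]]
  norm_num [Nat.factorial]
  ring

theorem tauNW_taylor_expansion (f : ℝ → ℝ) (hf : ContDiff ℝ 11 f) (x : ℝ) :
    (fun Δx : ℝ =>
        (f (x - 2 * Δx) - 5 * f (x - Δx) + 10 * f x
          - 10 * f (x + Δx) + 5 * f (x + 2 * Δx) - f (x + 3 * Δx)) ^ 2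
        - (iteratedDeriv 5 f x) ^ 2 * Δx ^ 10)
      =O[𝓝[>] (0 : ℝ)] fun Δx => Δx ^ 11 := by
  exact (isBigO_sq_sub_sq (isBigO_fifthDifference_add (hf.of_le (by norm_num)) x)).mono
    nhdsWithin_le_nhds
end
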